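/- Let q ∈ [0,1] and let y be a computable sequence with infinitely many 1's. If x is Martin-Löf random with respect to the Bernoulli(q) measure relative to q, then the selected subsequence x/y is also Martin-Löf random with respect to the Bernoulli(q) measure relative to q. -/

import Mathlib

open MeasureTheory Filter

/-- Cylinder set of infinite binary sequences extending the finite string `s`. -/
def cyl (s : List Bool) : Set (ℕ → Bool) := {x | ∀ i : Fin s.length, x i.val = s.get i}

/-- The length-`n` prefix of the infinite sequence `y`. -/
def pre (y : ℕ → Bool) (n : ℕ) : List Bool := List.ofFn (fun i : Fin n => y i.val)

/-- `select x y` is the subsequence `x/y` of `x` at positions `i` with `y i = true`. -/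
noncomputable def select (x y : ℕ → Bool) : ℕ → Bool :=
  fun n => x (Nat.nth (fun i => y i = true) n)

/-- Subsequence of a finite string `s` at the positions where `t` is `true`. -/
def selStr (s t : List Bool) : List Bool :=
  ((List.zip s t).filter (fun p => p.2)).map Prod.fst

/-- `s` is a prefix of the infinite sequence `f`. -/
def IsPrefixSeq (s : List Bool) (f : ℕ → Bool) : Prop :=
  ∀ i : Fin s.length, f i.val = s.get i

/-- Open set determined by level `n` of a test. -/
def openU (U : ℕ → Set (List Bool)) (n : ℕ) : Set (ℕ → Bool) := ⋃ s ∈ U n, cyl s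

/-- Martin-Löf test with respect to the measure `μ`. -/
def MLTest (μ : Measure (ℕ → Bool)) (U : ℕ → Set (List Bool)) : Prop :=
  REPred (fun p : ℕ × List Bool => p.2 ∈ U p.1) ∧
  (∀ n, openU U (n + 1) ⊆ openU U n) ∧
  (∀ n, μ (openU U n) < (2 : ENNReal)⁻¹ ^ n)

/-- `x` is Martin-Löf random w.r.t. `μ`: it passes every ML test. -/
def MLRandom (μ : Measure (ℕ → Bool)) (x : ℕ → Bool) : Prop :=
  ∀ U : ℕ → Set (List Bool), MLTest μ U → ∃ n, x ∉ openU U n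

/-- `μ` is a computable measure. -/
def ComputableMeasure (μ : Measure (ℕ → Bool)) : Prop :=
  ∃ A : List Bool → ℕ → ℚ, Computable₂ A ∧
    ∀ s k, |(μ (cyl s)).toReal - (A s k : ℝ)| < 1 / (k + 1)

/-- The uniform (fair-coin) measure, characterized on cylinders. -/
def IsUniform (μ : Measure (ℕ → Bool)) : Prop :=
  ∀ s : List Bool, μ (cyl s) = (2 : ENNReal)⁻¹ ^ s.length

/-- The first `m` dyadic approximations `⌊q·2^i⌋` of the real oracle `q`. -/
noncomputable def oracleList (q : ℝ) (m : ℕ) : List ℤ :=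
  List.ofFn (fun i : Fin m => ⌊q * 2 ^ i.val⌋)

/-- `U` is recursively enumerable relative to the real oracle `q`: it is enumerated
by an r.e. predicate with access to finitely many approximations of `q`. -/
def RePredIn (q : ℝ) (U : ℕ × List Bool → Prop) : Prop :=
  ∃ V : List ℤ × (ℕ × List Bool) → Prop, REPred V ∧
    ∀ p, U p ↔ ∃ m, V (oracleList q m, p)

/-- Martin-Löf test w.r.t. `μ`, relative to the oracle `q`. -/
def MLTestRel (q : ℝ) (μ : MeasureTheory.Measure (ℕ → Bool))
    (U : ℕ → Set (List Bool)) : Prop :=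
  RePredIn q (fun p => p.2 ∈ U p.1) ∧
  (∀ n, openU U (n + 1) ⊆ openU U n) ∧
  (∀ n, μ (openU U n) < (2 : ENNReal)⁻¹ ^ n)

/-- `x` is ML-random w.r.t. `μ` relative to the oracle `q`. -/
def MLRandomRel (q : ℝ) (μ : MeasureTheory.Measure (ℕ → Bool)) (x : ℕ → Bool) : Prop :=
  ∀ U : ℕ → Set (List Bool), MLTestRel q μ U → ∃ n, x ∉ openU U n

/-- `μ` is the i.i.d. Bernoulli(`q`) measure, characterized on cylinders. -/
def IsBernoulli (q : ℝ) (μ : MeasureTheory.Measure (ℕ → Bool)) : Prop :=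
  ∀ s : List Bool,
    μ (cyl s) = ENNReal.ofReal (q ^ (s.count true) * (1 - q) ^ (s.count false))

/-!
Selection along `y` is the coordinate map `x ↦ x ∘ nth_y`, and `nth_y` is injective, so it
preserves the i.i.d. product measure `Bernoulli(q)^ℕ` (which is what `IsBernoulli q μ` pins down,
cylinders generating the product σ-algebra). On cylinders it is computed by the computable string
map `t ↦ t / (y ↾ |t|)`. Pulling a `q`-relative test for `x / y` back along this string map
therefore gives a `q`-relative test for `x`, with the same measure bounds, that covers `x`
whenever the original test covers `x / y`.
-/

open Function ProbabilityTheory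

@[simp] lemma length_pre (x : ℕ → Bool) (n : ℕ) : (pre x n).length = n := by
  simp [pre]

lemma pre_succ (x : ℕ → Bool) (n : ℕ) : pre x (n + 1) = pre x n ++ [x n] := by
  simp only [pre, List.ofFn_succ_last, Fin.val_last, Fin.val_castSucc]

lemma mem_cyl_iff_pre_eq {x : ℕ → Bool} {s : List Bool} : x ∈ cyl s ↔ pre x s.length = s := by
  simp [cyl, pre, List.ext_get_iff, Fin.forall_iff]

lemma mem_cyl_pre (x : ℕ → Bool) (n : ℕ) : x ∈ cyl (pre x n) := by
  simp [mem_cyl_iff_pre_eq]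

lemma cyl_eq_pi (s : List Bool) :
    cyl s = Set.pi (Finset.range s.length : Set ℕ) fun i => {s.getD i false} := by
  ext x
  simp +contextual [cyl, Fin.forall_iff]

lemma measurableSet_cyl (s : List Bool) : MeasurableSet (cyl s) := by
  rw [cyl_eq_pi]
  exact .pi (Finset.countable_toSet _) fun _ _ => measurableSet_singleton _

lemma measurableSet_openU (U : ℕ → Set (List Bool)) (n : ℕ) : MeasurableSet (openU U n) :=
  .biUnion (Set.to_countable _) fun s _ => measurableSet_cyl s

lemma preimage_restrict_range_singleton (N : ℕ) (f : Finset.range N → Bool) :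
    (Finset.range N).restrict ⁻¹' ({f} : Set (Finset.range N → Bool)) =
      cyl (List.ofFn fun i : Fin N => f ⟨i, by simp⟩) := by
  ext x
  simp [cyl, funext_iff, Fin.forall_iff]

lemma ext_of_cyl {μ ν : Measure (ℕ → Bool)} [IsFiniteMeasure ν]
    (h : ∀ s, μ (cyl s) = ν (cyl s)) : μ = ν := by
  refine IsProjectiveLimit.unique (P := fun I => ν.map I.restrict) (fun I => ?_) (fun I => rfl)
  obtain ⟨N, hN⟩ := Finset.exists_nat_subset_range I
  simp only [← Finset.restrict₂_comp_restrict hN]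
  rw [← Measure.map_map (by fun_prop) (by fun_prop),
    ← Measure.map_map (by fun_prop) (by fun_prop)]
  congr 1
  refine Measure.ext_iff_singleton.mpr fun f => ?_
  rw [Measure.map_apply (by fun_prop) (measurableSet_singleton f),
    Measure.map_apply (by fun_prop) (measurableSet_singleton f),
    preimage_restrict_range_singleton, h]

lemma prod_range_ite_getD (p : ℝ) (s : List Bool) :
    ∏ i ∈ Finset.range s.length, (if s.getD i false then p else 1 - p) =
      p ^ s.count true * (1 - p) ^ s.count false := by
  induction s with
  | nil => simp
  | cons b s ih =>
    rw [List.length_cons, Finset.prod_range_succ']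
    simp only [List.getD_cons_succ, List.getD_cons_zero, ih]
    cases b <;> simp [pow_succ] <;> ring

lemma bernoulliMeasure_singleton (p : unitInterval) (b : Bool) :
    Ber(true, false, p) {b} = ENNReal.ofReal (if b then p else 1 - p) := by
  rw [← ofReal_measureReal]
  cases b <;> simp

lemma infinitePi_bernoulliMeasure_cyl (p : unitInterval) (s : List Bool) :
    Measure.infinitePi (fun _ : ℕ => Ber(true, false, p)) (cyl s) =
      ENNReal.ofReal ((p : ℝ) ^ s.count true * (1 - p) ^ s.count false) := by
  rw [cyl_eq_pi, Measure.infinitePi_pi _ fun _ _ => measurableSet_singleton _,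
    ← prod_range_ite_getD]
  simp only [bernoulliMeasure_singleton]
  rw [ENNReal.ofReal_prod_of_nonneg fun i _ => by split_ifs <;> unit_interval]

lemma IsBernoulli.eq_infinitePi {q : ℝ} (hq : q ∈ Set.Icc (0 : ℝ) 1) {μ : Measure (ℕ → Bool)}
    (hμ : IsBernoulli q μ) :
    μ = Measure.infinitePi fun _ => Ber(true, false, ⟨q, hq⟩) :=
  ext_of_cyl fun s => by rw [hμ, infinitePi_bernoulliMeasure_cyl]

lemma MeasureTheory.Measure.infinitePi_map_comp_of_injective {ι κ X : Type*} [MeasurableSpace X]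
    (ν : Measure X) [IsProbabilityMeasure ν] {g : κ → ι} (hg : Injective g) :
    (Measure.infinitePi fun _ : ι => ν).map (· ∘ g) = Measure.infinitePi fun _ : κ => ν := by
  refine Measure.eq_infinitePi _ fun s t ht => ?_
  have hpre : (· ∘ g) ⁻¹' Set.pi (s : Set κ) t =
      Set.pi (s.map ⟨g, hg⟩ : Set ι) (Function.extend g t fun _ => Set.univ) := by
    ext x
    simp [hg.extend_apply]
  rw [Measure.map_apply (by fun_prop) (.pi s.countable_toSet fun i _ => ht i), hpre,
    Measure.infinitePi_pi _ ?_, Finset.prod_map]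
  · simp [hg.extend_apply]
  · intro i hi
    obtain ⟨k, -, rfl⟩ := Finset.mem_map.mp hi
    simpa [hg.extend_apply] using ht k

lemma measurePreserving_select {q : ℝ} (hq : q ∈ Set.Icc (0 : ℝ) 1) {μ : Measure (ℕ → Bool)}
    (hμ : IsBernoulli q μ) {y : ℕ → Bool} (hyinf : {i | y i = true}.Infinite) :
    MeasurePreserving (fun x => select x y) μ μ where
  measurable := by unfold select; fun_prop
  map_eq := by
    rw [hμ.eq_infinitePi hq]
    exact Measure.infinitePi_map_comp_of_injective _ (Nat.nth_strictMono hyinf).injective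

lemma selStr_append_singleton {s t : List Bool} (h : s.length = t.length) (a b : Bool) :
    selStr (s ++ [a]) (t ++ [b]) = selStr s t ++ if b then [a] else [] := by
  cases b <;> simp [selStr, List.zip_append h]

lemma selStr_pre (x y : ℕ → Bool) (m : ℕ) :
    selStr (pre x m) (pre y m) = pre (select x y) (Nat.count (fun i => y i = true) m) := by
  induction m with
  | zero => rfl
  | succ m ih =>
    rw [pre_succ, pre_succ, selStr_append_singleton (by simp), ih, Nat.count_succ]
    by_cases hy : y m = true
    · simp [hy, pre_succ, select, Nat.nth_count (p := fun i => y i = true) hy]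
    · simp [hy]

lemma iUnion_cyl_selStr_pre {y : ℕ → Bool} (hyinf : {i | y i = true}.Infinite)
    (A : Set (List Bool)) :
    ⋃ t ∈ (fun t => selStr t (pre y t.length)) ⁻¹' A, cyl t =
      (fun x => select x y) ⁻¹' ⋃ s ∈ A, cyl s := by
  ext x
  simp only [Set.mem_iUnion, Set.mem_preimage, exists_prop]
  constructor
  · rintro ⟨t, ht, hxt⟩
    rw [← mem_cyl_iff_pre_eq.mp hxt, length_pre, selStr_pre] at ht
    exact ⟨_, ht, mem_cyl_pre _ _⟩
  · rintro ⟨s, hs, hxs⟩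
    -- the prefix of `x` ending just before the `|s|`-th selected position selects exactly `s`
    refine ⟨pre x (Nat.nth (fun i => y i = true) s.length), ?_, mem_cyl_pre _ _⟩
    rwa [length_pre, selStr_pre, Nat.count_nth_of_infinite hyinf, mem_cyl_iff_pre_eq.mp hxs]

lemma computable_pre {y : ℕ → Bool} (hy : Computable y) : Computable (pre y) := by
  have hstep : Computable₂ fun (_ : ℕ) (p : ℕ × List Bool) => p.2 ++ [y p.1] :=
    Computable.list_concat.comp (Computable.snd.comp .snd) (hy.comp (Computable.fst.comp .snd))
  refine (Computable.nat_rec .id (.const []) hstep).of_eq fun n => ?_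
  induction n with
  | zero => rfl
  | succ n ih => rw [pre_succ, ← ih]; rfl

lemma List.zip_eq_map_range {α β : Type*} [Inhabited α] [Inhabited β] (s : List α)
    (t : List β) :
    s.zip t = (List.range (min s.length t.length)).map fun i => (s.getI i, t.getI i) := by
  refine List.ext_getElem (by simp) fun i h₁ h₂ => ?_
  simp only [List.length_map, List.length_range, lt_min_iff] at h₂
  simp [List.getI_eq_getElem _ h₂.1, List.getI_eq_getElem _ h₂.2]

lemma Primrec.list_zip {α β : Type*} [Primcodable α] [Primcodable β] [Inhabited α]
    [Inhabited β] : Primrec₂ (List.zip : List α → List β → List (α × β)) :=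
  Primrec.of_eq
    (Primrec.list_map (Primrec.list_range.comp
      (Primrec.nat_min.comp (Primrec.list_length.comp .fst) (Primrec.list_length.comp .snd)))
      (Primrec.pair (Primrec.list_getI.comp (Primrec.fst.comp .fst) .snd)
        (Primrec.list_getI.comp (Primrec.snd.comp .fst) .snd)).to₂)
    fun p => (List.zip_eq_map_range p.1 p.2).symm

lemma primrec₂_selStr : Primrec₂ selStr := by
  have hfilter : Primrec fun l : List (Bool × Bool) => l.filter (·.2) :=
    (Primrec.listFilter (p := fun b : Bool × Bool => b.2 = true)
      (Primrec.eq.comp Primrec.snd (Primrec.const true))).of_eq fun l => by simp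
  exact Primrec.list_map (hfilter.comp Primrec.list_zip) (Primrec.fst.comp .snd).to₂

lemma RePredIn.comp {q : ℝ} {P : ℕ × List Bool → Prop} (hP : RePredIn q P)
    {f : ℕ × List Bool → ℕ × List Bool} (hf : Computable f) : RePredIn q fun p => P (f p) :=
  let ⟨V, hV, hVP⟩ := hP
  ⟨fun a => V (a.1, f a.2), Partrec.comp hV (Computable.fst.pair (hf.comp .snd)),
    fun p => hVP (f p)⟩

lemma MLRandomRel.of_measurePreserving {q : ℝ} {μ ν : Measure (ℕ → Bool)}
    {F : (ℕ → Bool) → ℕ → Bool} (hF : MeasurePreserving F μ ν)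
    {φ : List Bool → List Bool} (hφ : Computable φ)
    (hFφ : ∀ A, ⋃ t ∈ φ ⁻¹' A, cyl t = F ⁻¹' ⋃ s ∈ A, cyl s)
    {x : ℕ → Bool} (hx : MLRandomRel q μ x) : MLRandomRel q ν (F x) := by
  rintro U ⟨hU, hanti, hsmall⟩
  have hpull (n : ℕ) : openU (fun k => φ ⁻¹' U k) n = F ⁻¹' openU U n := hFφ (U n)
  have htest : MLTestRel q μ fun k => φ ⁻¹' U k := by
    refine ⟨hU.comp (f := Prod.map id φ) (Computable.fst.pair (hφ.comp .snd)),
      fun n => ?_, fun n => ?_⟩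
    · simpa only [hpull] using Set.preimage_mono (hanti n)
    · rw [hpull, hF.measure_preimage (measurableSet_openU U n).nullMeasurableSet]
      exact hsmall n
  obtain ⟨n, hn⟩ := hx _ htest
  exact ⟨n, by simpa only [hpull, Set.mem_preimage] using hn⟩

theorem stmt12_general (q : ℝ) (hq : q ∈ Set.Icc (0 : ℝ) 1)
    (μ : MeasureTheory.Measure (ℕ → Bool))
    (hμ : IsBernoulli q μ)
    (y : ℕ → Bool) (hycomp : Computable y) (hyinf : {i | y i = true}.Infinite)
    (x : ℕ → Bool) (hx : MLRandomRel q μ x) :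
    MLRandomRel q μ (select x y) :=
  hx.of_measurePreserving (measurePreserving_select hq hμ hyinf)
    (primrec₂_selStr.to_comp.comp .id ((computable_pre hycomp).comp .list_length))
    (iUnion_cyl_selStr_pre hyinf)

/-- Let `q ∈ [0,1]` and let `y` be a computable sequence with
infinitely many 1's. If `x` is ML-random w.r.t. Bernoulli(`q`) relative to `q`,
then so is the selected subsequence `x/y`. -/
theorem stmt12 (q : ℝ) (hq : q ∈ Set.Icc (0 : ℝ) 1)
    (μ : MeasureTheory.Measure (ℕ → Bool)) [MeasureTheory.IsProbabilityMeasure μ]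
    (hμ : IsBernoulli q μ)
    (y : ℕ → Bool) (hycomp : Computable y) (hyinf : {i | y i = true}.Infinite)
    (x : ℕ → Bool) (hx : MLRandomRel q μ x) :
    MLRandomRel q μ (select x y) :=
  stmt12_general q hq μ hμ y hycomp hyinf x hx
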